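/- Suppose 1 < p < ∞, ‖θ‖_{p,*} ≤ α₁ + α₂, let α̂ = min(α₁, α₂) and x̂ = x₂ if α₁ < α₂ else x̂ = x₁. Then the gap between the supremum sup_x (f(⟨θ,x⟩) − α₁‖x₁−x‖_p − α₂‖x₂−x‖_p) and its lower bound f(⟨θ, x̂⟩) − α̂·‖x₁−x₂‖_p is at most 2·α̂·‖x₁−x₂‖_p. In particular the lower bound never exceeds the supremum, and the supremum exceeds the lower bound by at most 2·α̂·‖x₁−x₂‖_p. -/

import Mathlib

/-!
Write `f t = log (1 + exp t)`, let `β = α̂` be the weight at `y` and `γ` the other weight, at the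
point `z = x̂`. Since `f` is `1`-Lipschitz and `|⟨θ, x - z⟩| ≤ ‖θ‖_{p,*} ‖x - z‖_p ≤ (β + γ) ‖x - z‖_p`
by Hölder, the triangle inequality `‖x - z‖_p ≤ ‖y - x‖_p + ‖y - z‖_p` bounds the objective at every
`x` by `f ⟨θ, z⟩ + β ‖y - z‖_p`, while its value at `x = z` is the lower bound
`f ⟨θ, z⟩ - β ‖y - z‖_p`.
-/

noncomputable def pnorm {n : ℕ} (p : ℝ) (v : Fin n → ℝ) : ℝ :=
  (∑ i, |v i| ^ p) ^ (1 / p)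

def dot {n : ℕ} (v w : Fin n → ℝ) : ℝ := ∑ i, v i * w i

open Finset

variable {n : ℕ}

section PNorm

variable {p : ℝ}

lemma pnorm_nonneg (p : ℝ) (v : Fin n → ℝ) : 0 ≤ pnorm p v :=
  Real.rpow_nonneg (sum_nonneg fun _ _ => Real.rpow_nonneg (abs_nonneg _) _) _

lemma pnorm_zero (hp : p ≠ 0) : pnorm p (0 : Fin n → ℝ) = 0 := by
  simp [pnorm, Real.zero_rpow hp, Real.zero_rpow (inv_ne_zero hp)]

lemma pnorm_neg (p : ℝ) (v : Fin n → ℝ) : pnorm p (-v) = pnorm p v := by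
  simp [pnorm]

lemma pnorm_sub_comm (p : ℝ) (v w : Fin n → ℝ) : pnorm p (v - w) = pnorm p (w - v) := by
  rw [← neg_sub, pnorm_neg]

lemma pnorm_add_le (hp : 1 ≤ p) (v w : Fin n → ℝ) : pnorm p (v + w) ≤ pnorm p v + pnorm p w :=
  Real.Lp_add_le _ _ _ hp

lemma pnorm_sub_le_sub_add_sub (hp : 1 ≤ p) (u v w : Fin n → ℝ) :
    pnorm p (u - w) ≤ pnorm p (u - v) + pnorm p (v - w) := by
  simpa using pnorm_add_le hp (u - v) (v - w)

end PNorm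

lemma dot_sub (θ v w : Fin n → ℝ) : dot θ (v - w) = dot θ v - dot θ w := by
  simp only [dot, Pi.sub_apply, mul_sub, sum_sub_distrib]

lemma abs_dot_le_pnorm_mul_pnorm {p r : ℝ} (hpr : p.HolderConjugate r) (θ v : Fin n → ℝ) :
    |dot θ v| ≤ pnorm r θ * pnorm p v :=
  calc |dot θ v| ≤ ∑ i, |θ i| * |v i| := by
        simpa only [dot, abs_mul] using abs_sum_le_sum_abs (fun i => θ i * v i) univ
    _ ≤ pnorm r θ * pnorm p v := by
        simpa only [pnorm, abs_abs] using
          Real.inner_le_Lp_mul_Lq univ (fun i => |θ i|) (fun i => |v i|) hpr.symm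

lemma log_one_add_exp_le_add_abs_sub (a b : ℝ) :
    Real.log (1 + Real.exp a) ≤ Real.log (1 + Real.exp b) + |a - b| := by
  have hexp : Real.exp a ≤ Real.exp |a - b| * Real.exp b := by
    rw [← Real.exp_add]
    exact Real.exp_le_exp.2 (by linarith [le_abs_self (a - b)])
  have hmul : 1 + Real.exp a ≤ Real.exp |a - b| * (1 + Real.exp b) := by
    nlinarith [Real.one_le_exp (abs_nonneg (a - b))]
  calc Real.log (1 + Real.exp a)
      ≤ Real.log (Real.exp |a - b| * (1 + Real.exp b)) := Real.log_le_log (by positivity) hmul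
    _ = Real.log (1 + Real.exp b) + |a - b| := by
        rw [Real.log_mul (by positivity) (by positivity), Real.log_exp, add_comm]

noncomputable def penalizedSoftplus (p : ℝ) (θ : Fin n → ℝ) (β γ : ℝ) (y z x : Fin n → ℝ) : ℝ :=
  Real.log (1 + Real.exp (dot θ x)) - β * pnorm p (y - x) - γ * pnorm p (z - x)

section PenalizedSoftplus

variable {p r β γ : ℝ} {θ : Fin n → ℝ}

lemma penalizedSoftplus_comm (p : ℝ) (θ : Fin n → ℝ) (β γ : ℝ) (y z : Fin n → ℝ) :
    penalizedSoftplus p θ β γ y z = penalizedSoftplus p θ γ β z y :=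
  funext fun _ => sub_right_comm _ _ _

lemma penalizedSoftplus_self_right (hp : p ≠ 0) (y z : Fin n → ℝ) :
    penalizedSoftplus p θ β γ y z z = Real.log (1 + Real.exp (dot θ z)) - β * pnorm p (y - z) := by
  simp [penalizedSoftplus, pnorm_zero hp]

lemma penalizedSoftplus_le (hpr : p.HolderConjugate r) (hβ : 0 ≤ β) (hθ : pnorm r θ ≤ β + γ)
    (y z x : Fin n → ℝ) :
    penalizedSoftplus p θ β γ y z x ≤ Real.log (1 + Real.exp (dot θ z)) + β * pnorm p (y - z) := by
  have hdot : |dot θ x - dot θ z| ≤ (β + γ) * pnorm p (z - x) :=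
    calc |dot θ x - dot θ z| = |dot θ (x - z)| := by rw [dot_sub]
      _ ≤ pnorm r θ * pnorm p (x - z) := abs_dot_le_pnorm_mul_pnorm hpr θ (x - z)
      _ ≤ (β + γ) * pnorm p (z - x) := by
        rw [pnorm_sub_comm p x z]
        exact mul_le_mul_of_nonneg_right hθ (pnorm_nonneg p _)
  have htri : pnorm p (z - x) ≤ pnorm p (y - z) + pnorm p (y - x) := by
    simpa only [pnorm_sub_comm p z y] using pnorm_sub_le_sub_add_sub hpr.lt.le z y x
  have := log_one_add_exp_le_add_abs_sub (dot θ x) (dot θ z)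
  unfold penalizedSoftplus
  nlinarith

lemma penalizedSoftplus_iSup_bounds (hpr : p.HolderConjugate r) (hβ : 0 ≤ β)
    (hθ : pnorm r θ ≤ β + γ) (y z : Fin n → ℝ) :
    Real.log (1 + Real.exp (dot θ z)) - β * pnorm p (y - z)
        ≤ ⨆ x, penalizedSoftplus p θ β γ y z x ∧
      ⨆ x, penalizedSoftplus p θ β γ y z x
        ≤ Real.log (1 + Real.exp (dot θ z)) - β * pnorm p (y - z) + 2 * β * pnorm p (y - z) := by
  have hle : ∀ x, penalizedSoftplus p θ β γ y z x
      ≤ Real.log (1 + Real.exp (dot θ z)) - β * pnorm p (y - z) + 2 * β * pnorm p (y - z) :=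
    fun x => (penalizedSoftplus_le hpr hβ hθ y z x).trans_eq (by ring)
  refine ⟨?_, ciSup_le hle⟩
  rw [← penalizedSoftplus_self_right hpr.ne_zero]
  exact le_ciSup ⟨_, Set.forall_mem_range.2 hle⟩ z

end PenalizedSoftplus

theorem stmt_15 (n : ℕ) (p r α₁ α₂ : ℝ) (hp : 1 < p) (hpr : 1 / p + 1 / r = 1)
    (hα₁ : 0 < α₁) (hα₂ : 0 < α₂)
    (x₁ x₂ θ : Fin n → ℝ) (hθ : pnorm r θ ≤ α₁ + α₂)
    (xhat : Fin n → ℝ) (hxhat : xhat = if α₁ < α₂ then x₂ else x₁)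
    (L S : ℝ)
    (hL : L = Real.log (1 + Real.exp (dot θ xhat)) - min α₁ α₂ * pnorm p (x₁ - x₂))
    (hS : S = sSup (Set.range fun x : Fin n → ℝ =>
        Real.log (1 + Real.exp (dot θ x)) - α₁ * pnorm p (x₁ - x) - α₂ * pnorm p (x₂ - x))) :
    L ≤ S ∧ S ≤ L + 2 * min α₁ α₂ * pnorm p (x₁ - x₂) := by
  have hconj : p.HolderConjugate r :=
    Real.holderConjugate_iff.2 ⟨hp, by simpa only [one_div] using hpr⟩
  have hS' : S = ⨆ x, penalizedSoftplus p θ α₁ α₂ x₁ x₂ x := hS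
  subst hL hS' hxhat
  split_ifs with h
  · rw [min_eq_left h.le]
    exact penalizedSoftplus_iSup_bounds hconj hα₁.le hθ x₁ x₂
  · rw [min_eq_right (not_lt.1 h), penalizedSoftplus_comm, pnorm_sub_comm p x₁ x₂]
    exact penalizedSoftplus_iSup_bounds hconj hα₂.le (add_comm α₁ α₂ ▸ hθ) x₂ x₁
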